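/- arXiv:2304.06922 — 2 statements merged into one kernel-verified Lean document; each statement's English description precedes it below -/
import Mathlib

section
/- Let G be a finite cyclic graph (a single cycle) and f₁, f₂ discrete Morse functions on G. If a critical simplex σ₁ of f₁ is connected to a critical simplex σ₂ of f₂ (of the same dimension), then the gradient path connecting them is unique. -/
open Finset

open scoped Classical

variable {V : Type*}

/-- An abstract simplicial complex on vertex type `V`: a finite set of nonempty
finite sets, closed under taking nonempty subsets (faces). -/
def IsComplex [DecidableEq V] (K : Finset (Finset V)) : Prop :=
  (∀ σ ∈ K, σ.Nonempty) ∧ ∀ σ ∈ K, ∀ τ : Finset V, τ ⊆ σ → τ.Nonempty → τ ∈ K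

/-- `f` is a discrete Morse function on the complex `L`: every simplex has at most one
cofacet with smaller-or-equal value, and at most one facet with larger-or-equal value. -/
def IsDMF [DecidableEq V] (L : Finset (Finset V)) (f : Finset V → ℝ) : Prop :=
  ∀ σ ∈ L,
    (L.filter fun τ => σ ⊆ τ ∧ τ.card = σ.card + 1 ∧ f τ ≤ f σ).card ≤ 1 ∧
    (L.filter fun ν => ν ⊆ σ ∧ σ.card = ν.card + 1 ∧ f σ ≤ f ν).card ≤ 1

/-- A simplex `σ` is critical for `f` in the complex `L`. -/
def IsCritical [DecidableEq V] (L : Finset (Finset V)) (f : Finset V → ℝ) (σ : Finset V) :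
    Prop :=
  σ ∈ L ∧
  (∀ τ ∈ L, σ ⊆ τ → τ.card = σ.card + 1 → f σ < f τ) ∧
  (∀ ν ∈ L, ν ⊆ σ → σ.card = ν.card + 1 → f ν < f σ)

/-- `K` is a (simple) graph: a simplicial complex of dimension at most 1. -/
def IsGraph [DecidableEq V] (K : Finset (Finset V)) : Prop :=
  IsComplex K ∧ ∀ σ ∈ K, σ.card ≤ 2

/-- One step of a gradient `V`-path of dimension `(0,1)`: move from vertex `a`
across the edge `{a, b}` (which forms a gradient pair with `a`) to the vertex `b`. -/
def VStep [DecidableEq V] (K : Finset (Finset V)) (f : Finset V → ℝ) (a b : V) : Prop :=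
  a ≠ b ∧ ({a, b} : Finset V) ∈ K ∧ f {a, b} ≤ f ({a} : Finset V)

/-- `l` is a gradient path (in the gradient vector field of `f`) of vertices
from `a` to `b`. -/
def IsVPath [DecidableEq V] (K : Finset (Finset V)) (f : Finset V → ℝ) (l : List V)
    (a b : V) : Prop :=
  l.Chain' (VStep K f) ∧ l.head? = some a ∧ l.getLast? = some b

/-- The vertex `a` is connected to the vertex `b` through a gradient path
in the gradient vector field of `f`. -/
def Conn0 [DecidableEq V] (K : Finset (Finset V)) (f : Finset V → ℝ) (a b : V) : Prop :=
  ∃ l : List V, IsVPath K f l a b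

/-- One step of a gradient path of edges: pass from the edge `e` to the edge `e'`
through a common vertex `v` forming a gradient pair with `e'`. -/
def EStep [DecidableEq V] (K : Finset (Finset V)) (f : Finset V → ℝ)
    (e e' : Finset V) : Prop :=
  e ∈ K ∧ e' ∈ K ∧ e.card = 2 ∧ e'.card = 2 ∧ e ≠ e' ∧
    ∃ v, v ∈ e ∧ v ∈ e' ∧ f e' ≤ f ({v} : Finset V)

/-- `l` is a gradient path of edges from `e` to `e'` in the gradient vector field of `f`. -/
def IsEPath [DecidableEq V] (K : Finset (Finset V)) (f : Finset V → ℝ)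
    (l : List (Finset V)) (e e' : Finset V) : Prop :=
  l.Chain' (EStep K f) ∧ l.head? = some e ∧ l.getLast? = some e'

/-- The edge `e` is connected to the edge `e'` through a gradient path
in the gradient vector field of `f`. -/
def Conn1 [DecidableEq V] (K : Finset (Finset V)) (f : Finset V → ℝ)
    (e e' : Finset V) : Prop :=
  ∃ l : List (Finset V), IsEPath K f l e e'

/-- The `f₁`-critical vertex `a` and the `f₂`-critical vertex `b` are strongly
connected: `a` is connected to `b` via a gradient path in the field of `f₂`, and
`b` is connected to `a` via a gradient path in the field of `f₁`. -/
def Strong0 [DecidableEq V] (K : Finset (Finset V)) (f₁ f₂ : Finset V → ℝ)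
    (a b : V) : Prop :=
  Conn0 K f₂ a b ∧ Conn0 K f₁ b a

/-- The `f₁`-critical edge `e` and the `f₂`-critical edge `e'` are strongly
connected: `e` is connected to `e'` via a gradient path in the field of `f₁`, and
`e'` is connected to `e` via a gradient path in the field of `f₂`. -/
def Strong1 [DecidableEq V] (K : Finset (Finset V)) (f₁ f₂ : Finset V → ℝ)
    (e e' : Finset V) : Prop :=
  Conn1 K f₁ e e' ∧ Conn1 K f₂ e' e

/-- The simple graph underlying the 1-dimensional complex `K`. -/
def toSG [DecidableEq V] (K : Finset (Finset V)) : SimpleGraph V where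
  Adj a b := a ≠ b ∧ ({a, b} : Finset V) ∈ K
  symm := ⟨fun a b h => ⟨h.1.symm, by rw [Finset.pair_comm]; exact h.2⟩⟩
  loopless := ⟨fun a h => h.1 rfl⟩

/-- If a step relation is deterministic and `z` is a dead end, then chains with the
same head ending at `z` are unique. -/
lemma chain_unique {α : Type*} (R : α → α → Prop)
    (hdet : ∀ a b c, R a b → R a c → b = c) (z : α) (hz : ∀ b, ¬ R z b) :
    ∀ l l' : List α, l.Chain' R → l'.Chain' R → l.head? = l'.head? →
      l.getLast? = some z → l'.getLast? = some z → l = l' := by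
  intro l
  induction l with
  | nil =>
    intro l' _ _ hh _ _
    cases l' with
    | nil => rfl
    | cons x t => simp at hh
  | cons x t ih =>
    intro l' hc hc' hh hl hl'
    cases l' with
    | nil => simp at hh
    | cons x' t' =>
      simp only [List.head?_cons, Option.some.injEq] at hh
      subst hh
      cases t with
      | nil =>
        have hx : x = z := by simpa using hl
        cases t' with
        | nil => rfl
        | cons y' t'' =>
          exact absurd (List.isChain_cons_cons.mp hc').1 (hx ▸ hz y')
      | cons y t₂ =>
        cases t' with
        | nil =>
          have hx : x = z := by simpa using hl'
          exact absurd (List.isChain_cons_cons.mp hc).1 (hx ▸ hz y)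
        | cons y' t'' =>
          have h1 := (List.isChain_cons_cons.mp hc).1
          have h2 := (List.isChain_cons_cons.mp hc').1
          have hy : y = y' := hdet x y y' h1 h2
          subst hy
          rw [List.getLast?_cons_cons] at hl hl'
          have := ih (y :: t'') (List.isChain_cons_cons.mp hc).2
            (List.isChain_cons_cons.mp hc').2 rfl hl hl'
          rw [this]

/-- On a cyclic graph (a single cycle), the gradient path connecting a critical
simplex of `f₁` to a connected critical simplex of `f₂` of the same dimension
is unique. -/
theorem cycle_path_unique [DecidableEq V] [Fintype V] (K : Finset (Finset V))
    (f₁ f₂ : Finset V → ℝ) (hG : IsGraph K) (hvert : ∀ v : V, ({v} : Finset V) ∈ K)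
    (hconn : (toSG K).Connected)
    (hdeg : ∀ v : V, (K.filter fun e => e.card = 2 ∧ v ∈ e).card = 2)
    (hf₁ : IsDMF K f₁) (hf₂ : IsDMF K f₂) :
    (∀ v₁ v₂ : V, IsCritical K f₁ {v₁} → IsCritical K f₂ {v₂} →
      ∀ l l' : List V, IsVPath K f₂ l v₁ v₂ → IsVPath K f₂ l' v₁ v₂ → l = l') ∧
    (∀ e₁ e₂ : Finset V, e₁.card = 2 → e₂.card = 2 →
      IsCritical K f₁ e₁ → IsCritical K f₂ e₂ →
      ∀ l l' : List (Finset V), IsEPath K f₁ l e₁ e₂ → IsEPath K f₁ l' e₁ e₂ → l = l') := by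
  constructor
  · intro v₁ v₂ hc₁ hc₂ l l' hp hp'
    have hdet : ∀ a b c, VStep K f₂ a b → VStep K f₂ a c → b = c := by
      intro a b c hb hc
      obtain ⟨hab, hb1, hb2⟩ := hb
      obtain ⟨hac, hc1, hc2⟩ := hc
      have h := (hf₂ {a} (hvert a)).1
      have hmem1 : ({a, b} : Finset V) ∈
          K.filter (fun τ => {a} ⊆ τ ∧ τ.card = ({a} : Finset V).card + 1 ∧ f₂ τ ≤ f₂ {a}) :=
        mem_filter.mpr ⟨hb1, by simp, by simp [Finset.card_pair hab], hb2⟩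
      have hmem2 : ({a, c} : Finset V) ∈
          K.filter (fun τ => {a} ⊆ τ ∧ τ.card = ({a} : Finset V).card + 1 ∧ f₂ τ ≤ f₂ {a}) :=
        mem_filter.mpr ⟨hc1, by simp, by simp [Finset.card_pair hac], hc2⟩
      have heq := Finset.card_le_one.mp h _ hmem1 _ hmem2
      have hbmem : b ∈ ({a, c} : Finset V) := heq ▸ (by simp)
      rcases Finset.mem_insert.mp hbmem with h' | h'
      · exact absurd h'.symm hab
      · simpa using h'
    have hz : ∀ b, ¬ VStep K f₂ v₂ b := by
      intro b hb
      obtain ⟨hne, hK, hle⟩ := hb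
      have := hc₂.2.1 {v₂, b} hK (by simp) (by simp [Finset.card_pair hne])
      linarith
    exact chain_unique _ hdet v₂ hz l l' hp.1 hp'.1 (hp.2.1.trans hp'.2.1.symm)
      hp.2.2 hp'.2.2
  · intro e₁ e₂ hcard₁ hcard₂ hc₁ hc₂ l l' hp hp'
    have hdet : ∀ a b c : Finset V, EStep K f₁ b a → EStep K f₁ c a → b = c := by
      intro a b c hb hc
      obtain ⟨hbK, haK, hbcard, hacard, hbne, v, hvb, hva, hvle⟩ := hb
      obtain ⟨hcK, haK', hccard, hacard', hcne, w, hwc, hwa, hwle⟩ := hc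
      have h := (hf₁ a haK).2
      have hm1 : ({v} : Finset V) ∈
          K.filter (fun ν => ν ⊆ a ∧ a.card = ν.card + 1 ∧ f₁ a ≤ f₁ ν) :=
        mem_filter.mpr ⟨hvert v, by simpa using hva, by simp [hacard], hvle⟩
      have hm2 : ({w} : Finset V) ∈
          K.filter (fun ν => ν ⊆ a ∧ a.card = ν.card + 1 ∧ f₁ a ≤ f₁ ν) :=
        mem_filter.mpr ⟨hvert w, by simpa using hwa, by simp [hacard], hwle⟩
      have hvw : v = w := by
        have := Finset.card_le_one.mp h _ hm1 _ hm2
        simpa using this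
      subst hvw
      by_contra hne
      have hsub : ({b, c, a} : Finset (Finset V)) ⊆ K.filter (fun e => e.card = 2 ∧ v ∈ e) := by
        intro x hx
        simp only [mem_insert, mem_singleton] at hx
        rcases hx with rfl | rfl | rfl
        · exact mem_filter.mpr ⟨hbK, hbcard, hvb⟩
        · exact mem_filter.mpr ⟨hcK, hccard, hwc⟩
        · exact mem_filter.mpr ⟨haK, hacard, hva⟩
      have hcard3 : ({b, c, a} : Finset (Finset V)).card = 3 := by
        rw [card_insert_of_notMem (by simp [hne, hbne]),
          card_insert_of_notMem (by simp [hcne]), card_singleton]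
      have hle := Finset.card_le_card hsub
      rw [hcard3, hdeg v] at hle
      omega
    have hdet' : ∀ a b c : Finset V, (fun x y => EStep K f₁ y x) a b →
        (fun x y => EStep K f₁ y x) a c → b = c := fun a b c hb hc => hdet a b c hb hc
    have hz : ∀ b, ¬ (fun x y => EStep K f₁ y x) e₁ b := by
      intro b hb
      obtain ⟨hbK, h1K, hbcard, h1card, hne, v, hvb, hv1, hvle⟩ := hb
      have := hc₁.2.2 {v} (hvert v) (by simpa using hv1) (by simp [hcard₁])
      linarith
    have hrev := chain_unique (fun x y => EStep K f₁ y x) hdet' e₁ hz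
      l.reverse l'.reverse
      (List.isChain_reverse.mpr hp.1) (List.isChain_reverse.mpr hp'.1)
      (by rw [List.head?_reverse, List.head?_reverse, hp.2.2, hp'.2.2])
      (by rw [List.getLast?_reverse, hp.2.1])
      (by rw [List.getLast?_reverse, hp'.2.1])
    exact List.reverse_injective hrev
end

section
/- Let G be a finite simple graph and f₁, f₂ optimal discrete Morse functions on G. Then the number of strongly connected pairs of vertices between f₁ and f₂ equals β₀(G), and the number of strongly connected pairs of edges between f₁ and f₂ is at least β₁(G). -/
open Finset

open scoped Classical

variable {V : Type*}

/-- The number of strongly connected pairs of vertices between `f₁` and `f₂`. -/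
noncomputable def A0 [DecidableEq V] (K : Finset (Finset V)) (f₁ f₂ : Finset V → ℝ) : ℕ :=
  Nat.card {p : V × V //
    IsCritical K f₁ {p.1} ∧ IsCritical K f₂ {p.2} ∧ Strong0 K f₁ f₂ p.1 p.2}

/-- The number of strongly connected pairs of edges between `f₁` and `f₂`. -/
noncomputable def A1 [DecidableEq V] (K : Finset (Finset V)) (f₁ f₂ : Finset V → ℝ) : ℕ :=
  Nat.card {p : Finset V × Finset V //
    p.1.card = 2 ∧ p.2.card = 2 ∧ IsCritical K f₁ p.1 ∧ IsCritical K f₂ p.2 ∧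
      Strong1 K f₁ f₂ p.1 p.2}
/-- `f` is an optimal discrete Morse function on the graph `K`: the number of
critical vertices is `β₀` and the number of critical edges is `β₁`. -/
def IsOptimal [DecidableEq V] [Fintype V] (K : Finset (Finset V)) (f : Finset V → ℝ) :
    Prop :=
  Nat.card {v : V // IsCritical K f {v}} = Nat.card (toSG K).ConnectedComponent ∧
  (Nat.card {e : Finset V // e.card = 2 ∧ IsCritical K f e} : ℤ) =
    (K.filter fun σ => σ.card = 2).card - Fintype.card V +
      Nat.card (toSG K).ConnectedComponent

section Aux
variable [DecidableEq V] {K : Finset (Finset V)} {f : Finset V → ℝ} {a b x : V}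

lemma aux_pair_eq {h : Finset V} {v w : V} (hv : v ∈ h) (hw : w ∈ h) (hvw : v ≠ w)
    (hcard : h.card = 2) : h = {v, w} := by
  refine (Finset.eq_of_subset_of_card_le ?_ ?_).symm
  · exact Finset.insert_subset hv (Finset.singleton_subset_iff.mpr hw)
  · rw [hcard, Finset.card_pair hvw]

lemma aux_other {c : Finset V} {v : V} (hc : c.card = 2) (hv : v ∈ c) :
    ∃ w, v ≠ w ∧ c = {v, w} := by
  obtain ⟨a, b, hab, rfl⟩ := Finset.card_eq_two.mp hc
  rcases Finset.mem_insert.mp hv with rfl | hv'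
  · exact ⟨b, hab, rfl⟩
  · obtain rfl : v = b := Finset.mem_singleton.mp hv'
    exact ⟨a, hab.symm, by rw [Finset.pair_comm]⟩

lemma stepdec (hvert : ∀ v : V, ({v} : Finset V) ∈ K) (hf : IsDMF K f)
    (h : VStep K f a b) : f {b} < f {a} := by
  obtain ⟨hab, hmem, hle⟩ := h
  have hcard : ({a, b} : Finset V).card = 2 := Finset.card_pair hab
  have h2 := (hf _ hmem).2
  have ha : ({a} : Finset V) ∈ K.filter fun ν =>
      ν ⊆ ({a, b} : Finset V) ∧ ({a, b} : Finset V).card = ν.card + 1 ∧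
        f {a, b} ≤ f ν := by
    simp only [Finset.mem_filter]
    exact ⟨hvert a, Finset.singleton_subset_iff.mpr (Finset.mem_insert_self a _),
      by simp [hcard], hle⟩
  have hblt : f {b} < f {a, b} := by
    by_contra hcon
    push_neg at hcon
    have hb : ({b} : Finset V) ∈ K.filter fun ν =>
        ν ⊆ ({a, b} : Finset V) ∧ ({a, b} : Finset V).card = ν.card + 1 ∧
          f {a, b} ≤ f ν := by
      simp only [Finset.mem_filter]
      exact ⟨hvert b, Finset.singleton_subset_iff.mpr (by simp), by simp [hcard], hcon⟩
    have hne : ({a} : Finset V) ≠ ({b} : Finset V) := by simpa using hab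
    have := Finset.one_lt_card.mpr ⟨_, ha, _, hb, hne⟩
    omega
  exact lt_of_lt_of_le hblt hle

lemma cofacet_unique (hvert : ∀ v : V, ({v} : Finset V) ∈ K) (hf : IsDMF K f)
    {c₁ c₂ : Finset V} (h₁ : c₁ ∈ K) (ha₁ : a ∈ c₁) (hc₁ : c₁.card = 2)
    (hl₁ : f c₁ ≤ f {a}) (h₂ : c₂ ∈ K) (ha₂ : a ∈ c₂) (hc₂ : c₂.card = 2)
    (hl₂ : f c₂ ≤ f {a}) : c₁ = c₂ := by
  have h1 := (hf _ (hvert a)).1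
  have mem : ∀ c : Finset V, c ∈ K → a ∈ c → c.card = 2 → f c ≤ f {a} →
      c ∈ K.filter fun τ => ({a} : Finset V) ⊆ τ ∧ τ.card = ({a} : Finset V).card + 1 ∧
        f τ ≤ f {a} := by
    intro c hc hac hcc hfc
    simp only [Finset.mem_filter]
    exact ⟨hc, Finset.singleton_subset_iff.mpr hac, by simp [hcc], hfc⟩
  exact Finset.card_le_one.mp h1 _ (mem _ h₁ ha₁ hc₁ hl₁) _ (mem _ h₂ ha₂ hc₂ hl₂)

lemma facet_unique (hvert : ∀ v : V, ({v} : Finset V) ∈ K) (hf : IsDMF K f)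
    {c : Finset V} (hc : c ∈ K) (hcc : c.card = 2) (hac : a ∈ c) (hbc : b ∈ c)
    (hfa : f c ≤ f {a}) (hfb : f c ≤ f {b}) : a = b := by
  have h2 := (hf _ hc).2
  have mem : ∀ z : V, z ∈ c → f c ≤ f {z} →
      ({z} : Finset V) ∈ K.filter fun ν => ν ⊆ c ∧ c.card = ν.card + 1 ∧ f c ≤ f ν := by
    intro z hz hfz
    simp only [Finset.mem_filter]
    exact ⟨hvert z, Finset.singleton_subset_iff.mpr hz, by simp [hcc], hfz⟩
  have := Finset.card_le_one.mp h2 _ (mem _ hac hfa) _ (mem _ hbc hfb)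
  simpa using this

lemma noncrit_vertex (hG : IsGraph K) (hvert : ∀ v : V, ({v} : Finset V) ∈ K)
    (h : ¬ IsCritical K f {a}) : ∃ b, VStep K f a b := by
  have h3 : ∀ ν ∈ K, ν ⊆ ({a} : Finset V) → ({a} : Finset V).card = ν.card + 1 →
      f ν < f {a} := by
    intro ν hν hsub hcard
    exfalso
    have hone : ({a} : Finset V).card = 1 := Finset.card_singleton a
    have hν0 : ν.card = 0 := by omega
    have hne := hG.1.1 ν hν
    rw [Finset.card_eq_zero] at hν0
    subst hν0
    simp at hne
  have h2 : ¬ ∀ τ ∈ K, ({a} : Finset V) ⊆ τ → τ.card = ({a} : Finset V).card + 1 →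
      f {a} < f τ := fun h2 => h ⟨hvert a, h2, h3⟩
  push_neg at h2
  obtain ⟨τ, hτK, hsub, hcard, hle⟩ := h2
  have haτ : a ∈ τ := hsub (Finset.mem_singleton_self a)
  have hc2 : τ.card = 2 := by simpa using hcard
  obtain ⟨b, hab, rfl⟩ := aux_other hc2 haτ
  exact ⟨b, hab, hτK, hle⟩

lemma noncrit_edge (hG : IsGraph K) (hvert : ∀ v : V, ({v} : Finset V) ∈ K)
    {c : Finset V} (hc : c ∈ K) (hcc : c.card = 2) (h : ¬ IsCritical K f c) :
    ∃ z ∈ c, f c ≤ f {z} := by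
  have h2 : ∀ τ ∈ K, c ⊆ τ → τ.card = c.card + 1 → f c < f τ := by
    intro τ hτ _ hcard
    exact absurd (hG.2 τ hτ) (by omega)
  have h3 : ¬ ∀ ν ∈ K, ν ⊆ c → c.card = ν.card + 1 → f ν < f c :=
    fun h3 => h ⟨hc, h2, h3⟩
  push_neg at h3
  obtain ⟨ν, hνK, hsub, hcard, hle⟩ := h3
  have hν1 : ν.card = 1 := by omega
  obtain ⟨z, rfl⟩ := Finset.card_eq_one.mp hν1
  exact ⟨z, hsub (Finset.mem_singleton_self z), hle⟩

end Aux
section Conn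
variable [DecidableEq V] {K : Finset (Finset V)} {f : Finset V → ℝ} {a b x : V}

lemma conn0_refl : Conn0 K f a a := ⟨[a], List.isChain_singleton a, rfl, rfl⟩

lemma conn0_cons (h : VStep K f a b) (h2 : Conn0 K f b x) : Conn0 K f a x := by
  obtain ⟨l, hc, hh, hl⟩ := h2
  cases l with
  | nil => simp at hh
  | cons c t =>
    obtain rfl : c = b := by simpa using hh
    refine ⟨a :: c :: t, List.isChain_cons_cons.mpr ⟨h, hc⟩, rfl, ?_⟩
    simpa [List.getLast?_cons_cons] using hl

lemma conn0_destruct (h : Conn0 K f a x) :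
    a = x ∨ ∃ b, VStep K f a b ∧ Conn0 K f b x := by
  obtain ⟨l, hc, hh, hl⟩ := h
  cases l with
  | nil => simp at hh
  | cons c t =>
    obtain rfl : c = a := by simpa using hh
    cases t with
    | nil => left; simpa using hl
    | cons d t' =>
      right
      exact ⟨d, (List.isChain_cons_cons.mp hc).1,
        ⟨d :: t', (List.isChain_cons_cons.mp hc).2, rfl,
          by simpa [List.getLast?_cons_cons] using hl⟩⟩

lemma conn0_mono_aux (hvert : ∀ v : V, ({v} : Finset V) ∈ K) (hf : IsDMF K f) :
    ∀ (l : List V) (a : V), l.Chain' (VStep K f) → l.head? = some a →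
      l.getLast? = some x → a = x ∨ f {x} < f {a} := by
  intro l
  induction l with
  | nil => intro a _ hh _; simp at hh
  | cons c t ih =>
    intro a hc hh hl
    obtain rfl : c = a := by simpa using hh
    cases t with
    | nil => left; simpa using hl
    | cons d t' =>
      right
      have hstep : VStep K f c d := (List.isChain_cons_cons.mp hc).1
      have hda : f {d} < f {c} := stepdec hvert hf hstep
      rcases ih d (List.isChain_cons_cons.mp hc).2 rfl
          (by simpa [List.getLast?_cons_cons] using hl) with rfl | hlt
      · exact hda
      · exact hlt.trans hda

lemma conn0_mono (hvert : ∀ v : V, ({v} : Finset V) ∈ K) (hf : IsDMF K f)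
    (h : Conn0 K f a x) : a = x ∨ f {x} < f {a} := by
  obtain ⟨l, hc, hh, hl⟩ := h
  exact conn0_mono_aux hvert hf l a hc hh hl

lemma vstep_adj (h : VStep K f a b) : (toSG K).Adj a b :=
  show a ≠ b ∧ ({a, b} : Finset V) ∈ K from ⟨h.1, h.2.1⟩

lemma conn0_reachable_aux :
    ∀ (l : List V) (a : V), l.Chain' (VStep K f) → l.head? = some a →
      l.getLast? = some x → (toSG K).Reachable a x := by
  intro l
  induction l with
  | nil => intro a _ hh _; simp at hh
  | cons c t ih =>
    intro a hc hh hl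
    obtain rfl : c = a := by simpa using hh
    cases t with
    | nil =>
      obtain rfl : c = x := by simpa using hl
      exact SimpleGraph.Reachable.refl c
    | cons d t' =>
      have hstep : VStep K f c d := (List.isChain_cons_cons.mp hc).1
      exact (vstep_adj hstep).reachable.trans
        (ih d (List.isChain_cons_cons.mp hc).2 rfl (by simpa [List.getLast?_cons_cons] using hl))

lemma conn0_reachable (h : Conn0 K f a x) : (toSG K).Reachable a x := by
  obtain ⟨l, hc, hh, hl⟩ := h
  exact conn0_reachable_aux l a hc hh hl

lemma descend0 [Fintype V] (hG : IsGraph K) (hvert : ∀ v : V, ({v} : Finset V) ∈ K)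
    (hf : IsDMF K f) :
    ∀ (n : ℕ) (a : V), (Finset.univ.filter fun v => f {v} < f {a}).card ≤ n →
      ∃ b, IsCritical K f {b} ∧ Conn0 K f a b ∧ (toSG K).Reachable a b := by
  intro n
  induction n with
  | zero =>
    intro a hn
    by_cases hcrit : IsCritical K f {a}
    · exact ⟨a, hcrit, conn0_refl, SimpleGraph.Reachable.refl a⟩
    · obtain ⟨b, hstep⟩ := noncrit_vertex hG hvert hcrit
      have hlt : f {b} < f {a} := stepdec hvert hf hstep
      have : b ∈ Finset.univ.filter fun v => f {v} < f {a} := by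
        simp [hlt]
      have := Finset.card_pos.mpr ⟨b, this⟩
      omega
  | succ n ih =>
    intro a hn
    by_cases hcrit : IsCritical K f {a}
    · exact ⟨a, hcrit, conn0_refl, SimpleGraph.Reachable.refl a⟩
    · obtain ⟨b, hstep⟩ := noncrit_vertex hG hvert hcrit
      have hlt : f {b} < f {a} := stepdec hvert hf hstep
      have hsub : (Finset.univ.filter fun v => f {v} < f {b}) ⊆
          Finset.univ.filter fun v => f {v} < f {a} := by
        intro v hv
        simp only [Finset.mem_filter] at *
        exact ⟨hv.1, hv.2.trans hlt⟩
      have hbmem : b ∈ Finset.univ.filter fun v => f {v} < f {a} := by simp [hlt]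
      have hcard : (Finset.univ.filter fun v => f {v} < f {b}).card <
          (Finset.univ.filter fun v => f {v} < f {a}).card := by
        refine Finset.card_lt_card ⟨hsub, fun hba => ?_⟩
        have := hba hbmem
        simp at this
      obtain ⟨c, hcrit', hconn, hreach⟩ := ih b (by omega)
      exact ⟨c, hcrit', conn0_cons hstep hconn,
        (SimpleGraph.Adj.reachable (vstep_adj hstep)).trans hreach⟩

lemma to_crit0 [Fintype V] (hG : IsGraph K) (hvert : ∀ v : V, ({v} : Finset V) ∈ K)
    (hf : IsDMF K f) (a : V) :
    ∃ b, IsCritical K f {b} ∧ Conn0 K f a b ∧ (toSG K).Reachable a b :=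
  descend0 hG hvert hf _ a le_rfl

end Conn
section Edge
variable [DecidableEq V] {K : Finset (Finset V)} {f : Finset V → ℝ} {x : V} {e : Finset V}

lemma conn1_refl {d : Finset V} : Conn1 K f d d := ⟨[d], List.isChain_singleton d, rfl, rfl⟩

lemma conn1_cons {d c e' : Finset V} (h : EStep K f d c) (h2 : Conn1 K f c e') :
    Conn1 K f d e' := by
  obtain ⟨l, hc, hh, hl⟩ := h2
  cases l with
  | nil => simp at hh
  | cons c₀ t =>
    obtain rfl : c₀ = c := by simpa using hh
    exact ⟨d :: c₀ :: t, List.isChain_cons_cons.mpr ⟨h, hc⟩, rfl,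
      by simpa [List.getLast?_cons_cons] using hl⟩

lemma conn1_snoc {d c e₀ : Finset V} (h2 : Conn1 K f e₀ d) (h : EStep K f d c) :
    Conn1 K f e₀ c := by
  obtain ⟨l, hc, hh, hl⟩ := h2
  refine ⟨l ++ [c], ?_, ?_, ?_⟩
  · rw [List.Chain', List.isChain_append]
    refine ⟨hc, List.isChain_singleton c, ?_⟩
    intro p hp q hq
    simp only [List.head?_cons, Option.mem_def, Option.some.injEq] at hq
    rw [Option.mem_def, hl] at hp
    obtain rfl : d = p := by simpa using hp
    subst hq
    exact h
  · cases l with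
    | nil => simp at hh
    | cons c₀ t => simpa using hh
  · simp

lemma edgepath_aux (hvert : ∀ v : V, ({v} : Finset V) ∈ K) (hf : IsDMF K f)
    (he : e ∈ K) (hecard : e.card = 2) (hx : x ∈ e) (hpx : f e ≤ f {x}) :
    ∀ (l : List V) (v : V) (h : Finset V), l.Chain' (VStep K f) → l.head? = some v →
      l.getLast? = some x → h ∈ K → h.card = 2 → v ∈ h → h ≠ e → Conn1 K f h e := by
  intro l
  induction l with
  | nil => intro v h _ hh _ _ _ _ _; simp at hh
  | cons c t ih =>
    intro v h hc hh hl hhK hhcard hvh hhe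
    obtain rfl : c = v := by simpa using hh
    cases t with
    | nil =>
      obtain rfl : c = x := by simpa using hl
      exact conn1_cons ⟨hhK, he, hhcard, hecard, hhe, c, hvh, hx, hpx⟩ conn1_refl
    | cons v' t' =>
      have hstep : VStep K f c v' := (List.isChain_cons_cons.mp hc).1
      have htail : (v' :: t').Chain' (VStep K f) := (List.isChain_cons_cons.mp hc).2
      have hltail : (v' :: t').getLast? = some x := by
        simpa [List.getLast?_cons_cons] using hl
      have hvx : c ≠ x := by
        rintro rfl
        have hconn : Conn0 K f v' c := ⟨v' :: t', htail, rfl, hltail⟩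
        rcases conn0_mono hvert hf hconn with rfl | hlt
        · exact absurd (stepdec hvert hf hstep) (lt_irrefl _)
        · have := stepdec hvert hf hstep; linarith
      have hc'K : ({c, v'} : Finset V) ∈ K := hstep.2.1
      have hc'le : f {c, v'} ≤ f {c} := hstep.2.2
      have hc'card : ({c, v'} : Finset V).card = 2 := Finset.card_pair hstep.1
      by_cases hch : ({c, v'} : Finset V) = h
      · exact ih v' h htail rfl hltail hhK hhcard
          (hch ▸ Finset.mem_insert_of_mem (Finset.mem_singleton_self v')) hhe
      · have hc'e : ({c, v'} : Finset V) ≠ e := by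
          intro hce
          exact hvx (facet_unique hvert hf he hecard (hce ▸ Finset.mem_insert_self c _)
            hx (hce ▸ hc'le) hpx)
        have hstep1 : EStep K f h {c, v'} :=
          ⟨hhK, hc'K, hhcard, hc'card, fun hh' => hch hh'.symm, c, hvh,
            Finset.mem_insert_self c _, hc'le⟩
        exact conn1_cons hstep1 (ih v' {c, v'} htail rfl hltail hc'K hc'card
          (Finset.mem_insert_of_mem (Finset.mem_singleton_self v')) hc'e)

lemma edgepath (hvert : ∀ v : V, ({v} : Finset V) ∈ K) (hf : IsDMF K f)
    (he : e ∈ K) (hecard : e.card = 2) (hx : x ∈ e) (hpx : f e ≤ f {x})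
    {v : V} {h : Finset V} (hconn : Conn0 K f v x) (hhK : h ∈ K) (hhcard : h.card = 2)
    (hvh : v ∈ h) (hhe : h ≠ e) : Conn1 K f h e := by
  obtain ⟨l, hc, hh, hl⟩ := hconn
  exact edgepath_aux hvert hf he hecard hx hpx l v h hc hh hl hhK hhcard hvh hhe

lemma boundary (hG : IsGraph K) (hvert : ∀ v : V, ({v} : Finset V) ∈ K)
    (hf : IsDMF K f) (he : e ∈ K) (hecard : e.card = 2) (hx : x ∈ e) (hpx : f e ≤ f {x})
    {v w : V} (hhK : ({v, w} : Finset V) ∈ K) (hvw : v ≠ w)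
    (hhe : ({v, w} : Finset V) ≠ e)
    (hvS : Conn0 K f v x) (hwS : ¬ Conn0 K f w x) : IsCritical K f {v, w} := by
  by_contra hcrit
  have hhcard : ({v, w} : Finset V).card = 2 := Finset.card_pair hvw
  obtain ⟨z, hz, hfz⟩ := noncrit_edge hG hvert hhK hhcard hcrit
  rcases Finset.mem_insert.mp hz with rfl | hz'
  · -- z = v
    rcases conn0_destruct hvS with rfl | ⟨u, hstep, hconn⟩
    · -- v = x : two cofacets e and {v,w} of {x}
      exact hhe (cofacet_unique hvert hf hhK (Finset.mem_insert_self z _) hhcard hfz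
        he hx hecard hpx)
    · have heq : ({z, u} : Finset V) = ({z, w} : Finset V) :=
        cofacet_unique hvert hf hstep.2.1 (Finset.mem_insert_self z _)
          (Finset.card_pair hstep.1) hstep.2.2 hhK (Finset.mem_insert_self z _) hhcard hfz
      have hu : u = w := by
        have : u ∈ ({z, w} : Finset V) := heq ▸ Finset.mem_insert_of_mem
          (Finset.mem_singleton_self u)
        rcases Finset.mem_insert.mp this with rfl | h'
        · exact absurd rfl hstep.1
        · exact Finset.mem_singleton.mp h'
      exact hwS (hu ▸ hconn)
  · -- z = w
    obtain rfl : z = w := Finset.mem_singleton.mp hz'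
    have hstep : VStep K f z v := ⟨hvw.symm, by rwa [Finset.pair_comm],
      by rwa [Finset.pair_comm z v]⟩
    exact hwS (conn0_cons hstep hvS)

end Edge
section Uniq
variable [DecidableEq V] [Fintype V] {K : Finset (Finset V)} {f : Finset V → ℝ}

lemma crit_unique (hG : IsGraph K) (hvert : ∀ v : V, ({v} : Finset V) ∈ K)
    (hf : IsDMF K f)
    (hcard : Nat.card {v : V // IsCritical K f {v}} = Nat.card (toSG K).ConnectedComponent)
    {b b' : V} (hb : IsCritical K f {b}) (hb' : IsCritical K f {b'})
    (hr : (toSG K).Reachable b b') : b = b' := by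
  classical
  haveI h1 : Fintype {v : V // IsCritical K f {v}} := Fintype.ofFinite _
  haveI h2 : Fintype (toSG K).ConnectedComponent := Fintype.ofFinite _
  set φ : {v : V // IsCritical K f {v}} → (toSG K).ConnectedComponent :=
    fun v => (toSG K).connectedComponentMk v.1 with hφ
  have hsurj : Function.Surjective φ := by
    intro c
    obtain ⟨a, rfl⟩ := c.exists_rep
    obtain ⟨b₀, hc, _, hreach⟩ := to_crit0 hG hvert hf a
    exact ⟨⟨b₀, hc⟩, SimpleGraph.ConnectedComponent.sound hreach.symm⟩
  have hbij : Function.Bijective φ := by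
    rw [Fintype.bijective_iff_surjective_and_card]
    refine ⟨hsurj, ?_⟩
    rw [← Nat.card_eq_fintype_card, ← Nat.card_eq_fintype_card]
    exact hcard
  have := hbij.1 (a₁ := ⟨b, hb⟩) (a₂ := ⟨b', hb'⟩)
    (SimpleGraph.ConnectedComponent.sound hr)
  exact congrArg Subtype.val this

end Uniq

section Descend
variable [DecidableEq V] [Fintype V] {K : Finset (Finset V)} {f₁ f₂ : Finset V → ℝ}
  {x : V} {e : Finset V}

lemma descend1 (hG : IsGraph K) (hvert : ∀ v : V, ({v} : Finset V) ∈ K)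
    (hf₁ : IsDMF K f₁) (hf₂ : IsDMF K f₂)
    (he : e ∈ K) (hecard : e.card = 2) (hcrit : IsCritical K f₁ e)
    (hx : x ∈ e) (hpx : f₂ e ≤ f₂ {x}) :
    ∀ (n : ℕ) (a : V) (d : Finset V),
      (Finset.univ.filter fun v => f₁ {v} < f₁ {a}).card ≤ n →
      d ∈ K → d.card = 2 → a ∈ d → Conn1 K f₁ e d → ¬ (f₁ d ≤ f₁ {a}) →
      (∃ g, g.card = 2 ∧ IsCritical K f₂ g ∧ Conn1 K f₁ e g ∧ Conn1 K f₂ g e) ∨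
      (∃ b, IsCritical K f₁ {b} ∧ (toSG K).Reachable a b ∧
        (Conn0 K f₂ a x ↔ Conn0 K f₂ b x)) := by
  intro n
  induction n with
  | zero =>
    intro a d hn hdK hdcard had hconn hnd
    by_cases hca : IsCritical K f₁ {a}
    · exact Or.inr ⟨a, hca, SimpleGraph.Reachable.refl a, Iff.rfl⟩
    · obtain ⟨w, hstep⟩ := noncrit_vertex hG hvert hca
      have hwa : f₁ {w} < f₁ {a} := stepdec hvert hf₁ hstep
      have : w ∈ Finset.univ.filter fun v => f₁ {v} < f₁ {a} := by simp [hwa]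
      have := Finset.card_pos.mpr ⟨w, this⟩
      omega
  | succ n ih =>
    intro a d hn hdK hdcard had hconn hnd
    by_cases hca : IsCritical K f₁ {a}
    · exact Or.inr ⟨a, hca, SimpleGraph.Reachable.refl a, Iff.rfl⟩
    · obtain ⟨w, hstep⟩ := noncrit_vertex hG hvert hca
      obtain ⟨haw, hhK, hhle⟩ := hstep
      have hwa : f₁ {w} < f₁ {a} := stepdec hvert hf₁ ⟨haw, hhK, hhle⟩
      have hhcard : ({a, w} : Finset V).card = 2 := Finset.card_pair haw
      have hamem : a ∈ ({a, w} : Finset V) := Finset.mem_insert_self a _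
      have hwmem : w ∈ ({a, w} : Finset V) :=
        Finset.mem_insert_of_mem (Finset.mem_singleton_self w)
      have hhd : ({a, w} : Finset V) ≠ d := fun hh => hnd (hh ▸ hhle)
      have hstepD : EStep K f₁ d {a, w} :=
        ⟨hdK, hhK, hdcard, hhcard, fun hh => hhd hh.symm, a, had, hamem, hhle⟩
      have hconn' : Conn1 K f₁ e {a, w} := conn1_snoc hconn hstepD
      have hnd' : ¬ (f₁ {a, w} ≤ f₁ {w}) := fun hcon =>
        haw (facet_unique hvert hf₁ hhK hhcard hamem hwmem hhle hcon)
      have hmeas : (Finset.univ.filter fun v => f₁ {v} < f₁ {w}).card ≤ n := by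
        have hsub : (Finset.univ.filter fun v => f₁ {v} < f₁ {w}) ⊆
            Finset.univ.filter fun v => f₁ {v} < f₁ {a} := by
          intro v hv
          simp only [Finset.mem_filter] at *
          exact ⟨hv.1, hv.2.trans hwa⟩
        have hwm : w ∈ Finset.univ.filter fun v => f₁ {v} < f₁ {a} := by simp [hwa]
        have hnotin : w ∉ Finset.univ.filter fun v => f₁ {v} < f₁ {w} := by simp
        have := Finset.card_lt_card ⟨hsub, fun hba => hnotin (hba hwm)⟩
        omega
      have hhe : ({a, w} : Finset V) ≠ e := by
        intro hh
        have hlt := hcrit.2.2 {a} (hvert a) (Finset.singleton_subset_iff.mpr (hh ▸ hamem))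
          (by simp [hecard])
        rw [← hh] at hlt
        exact absurd hhle (not_le.mpr hlt)
      by_cases hSa : Conn0 K f₂ a x
      · by_cases hSw : Conn0 K f₂ w x
        · rcases ih w {a, w} hmeas hhK hhcard hwmem hconn' hnd' with hgood | ⟨b, hb, hrb, hiff⟩
          · exact Or.inl hgood
          · exact Or.inr ⟨b, hb, (vstep_adj ⟨haw, hhK, hhle⟩).reachable.trans hrb,
              (iff_of_true hSa (hiff.mp hSw)).symm.symm⟩
        · -- crossing : a ∈ S, w ∉ S
          left
          have hcritH : IsCritical K f₂ {a, w} :=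
            boundary hG hvert hf₂ he hecard hx hpx hhK haw hhe hSa hSw
          exact ⟨{a, w}, hhcard, hcritH, hconn',
            edgepath hvert hf₂ he hecard hx hpx hSa hhK hhcard hamem hhe⟩
      · by_cases hSw : Conn0 K f₂ w x
        · -- crossing : w ∈ S, a ∉ S
          left
          have hcritH : IsCritical K f₂ {w, a} :=
            boundary hG hvert hf₂ he hecard hx hpx (by rwa [Finset.pair_comm a w] at hhK)
              haw.symm (by rwa [Finset.pair_comm a w] at hhe) hSw hSa
          rw [Finset.pair_comm w a] at hcritH
          exact ⟨{a, w}, hhcard, hcritH, hconn',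
            edgepath hvert hf₂ he hecard hx hpx hSw hhK hhcard hwmem hhe⟩
        · rcases ih w {a, w} hmeas hhK hhcard hwmem hconn' hnd' with hgood | ⟨b, hb, hrb, hiff⟩
          · exact Or.inl hgood
          · refine Or.inr ⟨b, hb, (vstep_adj ⟨haw, hhK, hhle⟩).reachable.trans hrb, ?_⟩
            constructor
            · intro h; exact absurd h hSa
            · intro h; exact absurd (hiff.mpr h) hSw

lemma strong1_exists (hG : IsGraph K) (hvert : ∀ v : V, ({v} : Finset V) ∈ K)
    (hf₁ : IsDMF K f₁) (hf₂ : IsDMF K f₂)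
    (hcard₁ : Nat.card {v : V // IsCritical K f₁ {v}} =
      Nat.card (toSG K).ConnectedComponent)
    (hecard : e.card = 2) (hcrit : IsCritical K f₁ e) :
    ∃ g, g.card = 2 ∧ IsCritical K f₂ g ∧ Conn1 K f₁ e g ∧ Conn1 K f₂ g e := by
  have heK : e ∈ K := hcrit.1
  by_cases hc2 : IsCritical K f₂ e
  · exact ⟨e, hecard, hc2, conn1_refl, conn1_refl⟩
  obtain ⟨x, hx, hpx⟩ := noncrit_edge hG hvert heK hecard hc2
  obtain ⟨y, hxy, hey⟩ := aux_other hecard hx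
  have hymem : y ∈ e := hey ▸ Finset.mem_insert_of_mem (Finset.mem_singleton_self y)
  have hyS : ¬ Conn0 K f₂ y x := by
    intro hcon
    rcases conn0_mono hvert hf₂ hcon with rfl | hlt
    · exact hxy rfl
    · have hyx : f₂ {y} < f₂ e := by
        by_contra hcon2
        push_neg at hcon2
        exact hxy (facet_unique hvert hf₂ heK hecard hx hymem hpx hcon2)
      linarith
  have hnx : ¬ f₁ e ≤ f₁ {x} := by
    have := hcrit.2.2 {x} (hvert x) (Finset.singleton_subset_iff.mpr hx) (by simp [hecard])
    exact not_le.mpr this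
  have hny : ¬ f₁ e ≤ f₁ {y} := by
    have := hcrit.2.2 {y} (hvert y) (Finset.singleton_subset_iff.mpr hymem)
      (by simp [hecard])
    exact not_le.mpr this
  rcases descend1 hG hvert hf₁ hf₂ heK hecard hcrit hx hpx _ x e le_rfl heK hecard hx
      conn1_refl hnx with hgood | ⟨b₁, hb₁, hrb₁, hiff₁⟩
  · exact hgood
  rcases descend1 hG hvert hf₁ hf₂ heK hecard hcrit hx hpx _ y e le_rfl heK hecard hymem
      conn1_refl hny with hgood | ⟨b₂, hb₂, hrb₂, hiff₂⟩
  · exact hgood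
  exfalso
  have hb₁S : Conn0 K f₂ b₁ x := hiff₁.mp conn0_refl
  have hb₂S : ¬ Conn0 K f₂ b₂ x := fun hcon => hyS (hiff₂.mpr hcon)
  have hadj : (toSG K).Adj x y :=
    show x ≠ y ∧ ({x, y} : Finset V) ∈ K from ⟨hxy, hey ▸ heK⟩
  have : b₁ = b₂ :=
    crit_unique hG hvert hf₁ hcard₁ hb₁ hb₂
      (hrb₁.symm.trans (hadj.reachable.trans hrb₂))
  subst this
  exact hb₂S hb₁S

end Descend
/-- For optimal discrete Morse functions on a graph, `A₀ = β₀` and `A₁ ≥ β₁`. -/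
theorem optimal_A0_A1 [DecidableEq V] [Fintype V] (K : Finset (Finset V))
    (f₁ f₂ : Finset V → ℝ) (hG : IsGraph K) (hvert : ∀ v : V, ({v} : Finset V) ∈ K)
    (hf₁ : IsDMF K f₁) (hf₂ : IsDMF K f₂)
    (hopt₁ : IsOptimal K f₁) (hopt₂ : IsOptimal K f₂) :
    A0 K f₁ f₂ = Nat.card (toSG K).ConnectedComponent ∧
    (A1 K f₁ f₂ : ℤ) ≥
      (K.filter fun σ => σ.card = 2).card - Fintype.card V +
        Nat.card (toSG K).ConnectedComponent := by
  classical
  constructor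
  · -- A₀ = β₀
    refine Nat.card_eq_of_bijective
      (fun p : {p : V × V // IsCritical K f₁ {p.1} ∧ IsCritical K f₂ {p.2} ∧
          Strong0 K f₁ f₂ p.1 p.2} => (toSG K).connectedComponentMk p.1.1) ⟨?_, ?_⟩
    · -- injective
      rintro ⟨⟨a, b⟩, hca, hcb, hs⟩ ⟨⟨a', b'⟩, hca', hcb', hs'⟩ hpq
      have hra : (toSG K).Reachable a a' := SimpleGraph.ConnectedComponent.exact hpq
      have haa : a = a' := crit_unique hG hvert hf₁ hopt₁.1 hca hca' hra
      have hrb : (toSG K).Reachable b b' :=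
        ((conn0_reachable hs.1).symm.trans hra).trans (conn0_reachable hs'.1)
      have hbb : b = b' := crit_unique hG hvert hf₂ hopt₂.1 hcb hcb' hrb
      subst haa; subst hbb; rfl
    · -- surjective
      intro c
      obtain ⟨a, rfl⟩ := c.exists_rep
      obtain ⟨a₁, hc₁, _, hr₁⟩ := to_crit0 hG hvert hf₁ a
      obtain ⟨a₂, hc₂, _, hr₂⟩ := to_crit0 hG hvert hf₂ a
      -- Conn0 f₂ a₁ a₂
      obtain ⟨b, hcb, hconnb, hrb⟩ := to_crit0 hG hvert hf₂ a₁
      have hb2 : b = a₂ := crit_unique hG hvert hf₂ hopt₂.1 hcb hc₂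
        ((hrb.symm.trans hr₁.symm).trans hr₂)
      rw [hb2] at hconnb
      obtain ⟨b', hcb', hconnb', hrb'⟩ := to_crit0 hG hvert hf₁ a₂
      have hb1 : b' = a₁ := crit_unique hG hvert hf₁ hopt₁.1 hcb' hc₁
        ((hrb'.symm.trans hr₂.symm).trans hr₁)
      rw [hb1] at hconnb'
      refine ⟨⟨(a₁, a₂), hc₁, hc₂, hconnb, hconnb'⟩, ?_⟩
      exact SimpleGraph.ConnectedComponent.sound hr₁.symm
  · -- A₁ ≥ β₁
    have key : ∀ e : {e : Finset V // e.card = 2 ∧ IsCritical K f₁ e},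
        ∃ g, g.card = 2 ∧ IsCritical K f₂ g ∧ Conn1 K f₁ e.1 g ∧ Conn1 K f₂ g e.1 :=
      fun e => strong1_exists hG hvert hf₁ hf₂ hopt₁.1 e.2.1 e.2.2
    choose g hg1 hg2 hg3 hg4 using key
    have hinj : Function.Injective
        (fun e : {e : Finset V // e.card = 2 ∧ IsCritical K f₁ e} =>
          (⟨(e.1, g e), e.2.1, hg1 e, e.2.2, hg2 e, hg3 e, hg4 e⟩ :
            {p : Finset V × Finset V // p.1.card = 2 ∧ p.2.card = 2 ∧
              IsCritical K f₁ p.1 ∧ IsCritical K f₂ p.2 ∧ Strong1 K f₁ f₂ p.1 p.2})) := by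
      intro e e' hee
      exact Subtype.ext (congrArg (fun p => p.1.1) hee)
    have hle : Nat.card {e : Finset V // e.card = 2 ∧ IsCritical K f₁ e} ≤
        A1 K f₁ f₂ := Nat.card_le_card_of_injective _ hinj
    rw [ge_iff_le, ← hopt₁.2]
    exact_mod_cast hle
end
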